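/- arXiv:1301.1205 — 2 statements merged into one kernel-verified Lean document; each statement's English description precedes it below -/
import Mathlib

section
/- In the partition algebra 𝐏ₙ(δ) with δ ≠ 0, two diagrams τ, ρ ∈ Pₙ generate the same two-sided ideal (𝐏ₙ τ 𝐏ₙ = 𝐏ₙ ρ 𝐏ₙ) if and only if r(τ) = r(ρ). -/
open scoped Classical
open Relation
noncomputable section

/-- Vertices of a diagram: `inl` = unprimed points `n̄`, `inr` = primed points `n̄'`. -/
abbrev DVert (n : ℕ) := Fin n ⊕ Fin n

/-- Tripled vertex set used for gluing: bottom (unprimed of the right factor),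
middle (identified vertices), top (primed of the left factor). -/
abbrev TVert (n : ℕ) := Fin n ⊕ (Fin n ⊕ Fin n)

def embBot (n : ℕ) : DVert n → TVert n := Sum.elim Sum.inl (fun i => Sum.inr (Sum.inl i))
def embTop (n : ℕ) : DVert n → TVert n :=
  Sum.elim (fun i => Sum.inr (Sum.inl i)) (fun i => Sum.inr (Sum.inr i))
def embOut (n : ℕ) : DVert n → TVert n := Sum.elim Sum.inl (fun i => Sum.inr (Sum.inr i))

/-- The minimal equivalence relation `χ` on the tripled vertex set containing
(the embedded copies of) `τ` and `ρ`. -/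
def glue (n : ℕ) (τ ρ : Setoid (DVert n)) : Setoid (TVert n) :=
  EqvGen.setoid (fun x y =>
    (∃ a b, ρ.r a b ∧ x = embBot n a ∧ y = embBot n b) ∨
    (∃ a b, τ.r a b ∧ x = embTop n a ∧ y = embTop n b))

/-- Composition `τ ∘ ρ` in the partition monoid: glue and restrict to the outer vertices. -/
def pcomp (n : ℕ) (τ ρ : Setoid (DVert n)) : Setoid (DVert n) where
  r x y := (glue n τ ρ).r (embOut n x) (embOut n y)
  iseqv := ⟨fun _ => (glue n τ ρ).iseqv.refl _, fun h => (glue n τ ρ).iseqv.symm h,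
    fun h₁ h₂ => (glue n τ ρ).iseqv.trans h₁ h₂⟩

/-- A middle vertex of the tripled vertex set. -/
def isMiddle {n : ℕ} (x : TVert n) : Prop := ∃ i, x = Sum.inr (Sum.inl i)

/-- `c(τ,ρ)`: the number of classes of the glued relation contained in the middle row. -/
def ccount (n : ℕ) (τ ρ : Setoid (DVert n)) : ℕ :=
  {C ∈ (glue n τ ρ).classes | ∀ x ∈ C, isMiddle x}.ncard

/-- A propagating part: one meeting both the unprimed and the primed vertices. -/
def IsPropagating {n : ℕ} (C : Set (DVert n)) : Prop :=
  (∃ i, Sum.inl i ∈ C) ∧ (∃ i, Sum.inr i ∈ C)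

/-- The rank `r(σ)`: the number of propagating parts of `σ`. -/
def prank (n : ℕ) (σ : Setoid (DVert n)) : ℕ :=
  {C ∈ σ.classes | IsPropagating C}.ncard

/-- The anti-involution `⋆` swapping primed and unprimed vertices. -/
def pstar (n : ℕ) (σ : Setoid (DVert n)) : Setoid (DVert n) where
  r x y := σ.r x.swap y.swap
  iseqv := ⟨fun _ => σ.iseqv.refl _, fun h => σ.iseqv.symm h,
    fun h₁ h₂ => σ.iseqv.trans h₁ h₂⟩

/-- Minimal unprimed vertex of a part. -/
def minL {n : ℕ} (C : Set (DVert n)) : ℕ :=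
  sInf {m : ℕ | ∃ j : Fin n, (j : ℕ) = m ∧ Sum.inl j ∈ C}

/-- Minimal primed vertex of a part. -/
def minR {n : ℕ} (C : Set (DVert n)) : ℕ :=
  sInf {m : ℕ | ∃ j : Fin n, (j : ℕ) = m ∧ Sum.inr j ∈ C}

/-- Position of a propagating part `C` of `σ` in the ordering (by minimal elements) of the
intersections of the propagating parts with the unprimed vertices. -/
def posL (n : ℕ) (σ : Setoid (DVert n)) (C : Set (DVert n)) : ℕ :=
  {D ∈ σ.classes | IsPropagating D ∧ minL D < minL C}.ncard

/-- Position of a propagating part `C` of `σ` in the ordering (by minimal elements) of the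
intersections of the propagating parts with the primed vertices. -/
def posR (n : ℕ) (σ : Setoid (DVert n)) (C : Set (DVert n)) : ℕ :=
  {D ∈ σ.classes | IsPropagating D ∧ minR D < minR C}.ncard

/-- The permutation `π_σ ∈ S_k` recording how propagating lines connect the two sides of `σ`
(for a diagram of rank `k`): the unique permutation sending the position of a propagating part
on the unprimed side to its position on the primed side. -/
def permAt (n k : ℕ) (σ : Setoid (DVert n)) : Equiv.Perm (Fin k) :=
  Classical.epsilon (fun π : Equiv.Perm (Fin k) =>
    ∀ C ∈ σ.classes, IsPropagating C → ∀ h : posL n σ C < k,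
      ((π ⟨posL n σ C, h⟩ : Fin k) : ℕ) = posR n σ C)

/-- The product of the partition algebra `𝐏ₙ(δ)` on the free vector space on diagrams. -/
def pmul (n : ℕ) (δ : ℂ) (f g : Setoid (DVert n) →₀ ℂ) : Setoid (DVert n) →₀ ℂ :=
  f.sum fun τ a => g.sum fun ρ b =>
    Finsupp.single (pcomp n τ ρ) (δ ^ ccount n τ ρ * (a * b))

/-- `i(π,s)`: the number of pairs `i < j` with `s i = j` and `π i > π j`. -/
def icount (n : ℕ) (π s : Equiv.Perm (Fin n)) : ℕ :=
  (Finset.univ.filter fun p : Fin n × Fin n => p.1 < p.2 ∧ s p.1 = p.2 ∧ π p.2 < π p.1).card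



/-!
Composition never increases rank: a propagating part of `τ ∘ ρ` is connected through the middle
row, so its lower vertices lie in a propagating part of `ρ` and its upper vertices in one of `τ`,
and distinct propagating parts of `τ ∘ ρ` give distinct parts of `ρ` (resp. `τ`).

Conversely, if `r(σ) ≤ r(τ)` then `σ = α ∘ τ ∘ β`. Attach the propagating parts of `σ`
injectively to propagating parts of `τ` and label every vertex of `σ` by the part of `τ` attached
to its part (by its own part when that is not propagating). Taking for `α` and `β` the fibres of
labellings that agree with those of `τ` and `σ` on the relevant rows, both compositions are
computed by one rule: two labellings agreeing on the middle row compose to the labelling of the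
outer rows, provided every label shared by the outer rows also occurs in the middle.

Hence, for `δ ≠ 0` (so that no product of diagrams vanishes), the ideal generated by `τ` is
spanned by the diagrams of rank at most `r(τ)`, and this span determines `r(τ)`.
-/

lemma Setoid.le_ker_rel {α : Type*} (σ : Setoid α) (x : α) : σ ≤ Setoid.ker (σ.r x) :=
  fun _ _ hab => propext ⟨fun h => σ.trans' h hab, fun h => σ.trans' h (σ.symm' hab)⟩

lemma Setoid.rel_of_mem_classes {α : Type*} {σ : Setoid α} {C : Set α} (hC : C ∈ σ.classes)
    {x y : α} (hx : x ∈ C) (hy : y ∈ C) : σ.r x y :=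
  σ.rel_iff_exists_classes.2 ⟨C, hC, hx, hy⟩

lemma Setoid.setOf_rel_eq_iff {α : Type*} {σ : Setoid α} {x y : α} :
    {z | σ.r z x} = {z | σ.r z y} ↔ σ.r x y :=
  ⟨fun h => (h ▸ σ.refl' x : x ∈ {z | σ.r z y}),
    fun h => Set.ext fun _ => ⟨(σ.trans' · h), (σ.trans' · (σ.symm' h))⟩⟩

lemma Setoid.eq_setOf_rel_of_mem {α : Type*} {σ : Setoid α} {C : Set α} (hC : C ∈ σ.classes)
    {x : α} (hx : x ∈ C) : C = {z | σ.r z x} :=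
  Setoid.eq_of_mem_classes hC hx (σ.mem_classes x) (σ.refl' x)

lemma Finsupp.subset_of_supported_le {α M R : Type*} [Semiring R] [AddCommMonoid M] [Module R M]
    [Nontrivial M] {s t : Set α} (h : Finsupp.supported M R s ≤ Finsupp.supported M R t) :
    s ⊆ t := fun a ha => by
  obtain ⟨m, hm⟩ := exists_ne (0 : M)
  exact (Finsupp.mem_supported R _).1 (h (Finsupp.single_mem_supported R m ha)) (by simp [hm])

section Glue

variable {n : ℕ} {X : Type*}

lemma glue_embBot {τ ρ : Setoid (DVert n)} {a b : DVert n} (h : ρ.r a b) :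
    (glue n τ ρ).r (embBot n a) (embBot n b) :=
  EqvGen.rel _ _ (Or.inl ⟨a, b, h, rfl, rfl⟩)

lemma glue_embTop {τ ρ : Setoid (DVert n)} {a b : DVert n} (h : τ.r a b) :
    (glue n τ ρ).r (embTop n a) (embTop n b) :=
  EqvGen.rel _ _ (Or.inr ⟨a, b, h, rfl, rfl⟩)

def glueLabel (φ ψ : DVert n → X) : TVert n → X :=
  Sum.elim (ψ ∘ Sum.inl) (Sum.elim (ψ ∘ Sum.inr) (φ ∘ Sum.inr))

lemma glue_le_ker_glueLabel {τ ρ : Setoid (DVert n)} {φ ψ : DVert n → X}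
    (hmid : ∀ m, φ (Sum.inl m) = ψ (Sum.inr m)) (hτ : τ ≤ Setoid.ker φ)
    (hρ : ρ ≤ Setoid.ker ψ) :
    glue n τ ρ ≤ Setoid.ker (glueLabel φ ψ) := by
  have hbot (v) : glueLabel φ ψ (embBot n v) = ψ v := by
    rcases v with i | m <;> rfl
  have htop (v) : glueLabel φ ψ (embTop n v) = φ v := by
    rcases v with m | j
    exacts [(hmid m).symm, rfl]
  refine Setoid.eqvGen_le ?_
  rintro x y (⟨a, b, hab, rfl, rfl⟩ | ⟨a, b, hab, rfl, rfl⟩)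
  · exact (hbot a).trans ((hρ hab).trans (hbot b).symm)
  · exact (htop a).trans ((hτ hab).trans (htop b).symm)

lemma glue_ker_ker {φ ψ : DVert n → X} (hmid : ∀ m, φ (Sum.inl m) = ψ (Sum.inr m))
    (hcross : ∀ i j, ψ (Sum.inl i) = φ (Sum.inr j) → ∃ m, ψ (Sum.inr m) = ψ (Sum.inl i)) :
    glue n (Setoid.ker φ) (Setoid.ker ψ) = Setoid.ker (glueLabel φ ψ) := by
  refine le_antisymm (glue_le_ker_glueLabel hmid le_rfl le_rfl) ?_
  have hbot {a b} (h : ψ a = ψ b) := glue_embBot (τ := Setoid.ker φ) (ρ := Setoid.ker ψ) h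
  have htop {a b} (h : φ a = φ b) := glue_embTop (τ := Setoid.ker φ) (ρ := Setoid.ker ψ) h
  have houter (i j) (h : ψ (Sum.inl i) = φ (Sum.inr j)) :
      (glue n (Setoid.ker φ) (Setoid.ker ψ)).r (Sum.inl i) (Sum.inr (Sum.inr j)) := by
    obtain ⟨m, hm⟩ := hcross i j h
    exact Setoid.trans' _ (hbot hm.symm) (htop ((hmid m).trans (hm.trans h)))
  rintro (i | m | j) (i' | m' | j') h
  · exact hbot h
  · exact hbot h
  · exact houter i j' h
  · exact hbot h
  · exact hbot h
  · exact htop ((hmid m).trans h)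
  · exact Setoid.symm' _ (houter i' j h.symm)
  · exact htop (h.trans (hmid m').symm)
  · exact htop h

lemma pcomp_ker_ker {φ ψ : DVert n → X} (hmid : ∀ m, φ (Sum.inl m) = ψ (Sum.inr m))
    (hcross : ∀ i j, ψ (Sum.inl i) = φ (Sum.inr j) → ∃ m, ψ (Sum.inr m) = ψ (Sum.inl i)) :
    pcomp n (Setoid.ker φ) (Setoid.ker ψ) =
      Setoid.ker (Sum.elim (ψ ∘ Sum.inl) (φ ∘ Sum.inr)) := by
  refine Setoid.ext fun u v => ?_
  change (glue n _ _).r (embOut n u) (embOut n v) ↔ _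
  rw [glue_ker_ker hmid hcross]
  rcases u with i | j <;> rcases v with i' | j' <;> rfl

end Glue

section Rank

variable {n : ℕ}

lemma exists_rel_inr_of_pcomp {τ ρ : Setoid (DVert n)} {i j : Fin n}
    (h : (pcomp n τ ρ).r (Sum.inl i) (Sum.inr j)) : ∃ m, ρ.r (Sum.inl i) (Sum.inr m) := by
  by_contra! hno
  -- otherwise `ρ`-relatedness to `inl i` labels the glued vertices, with the upper row all `False`
  have hlabel := glue_le_ker_glueLabel (φ := fun _ => False) (ψ := ρ.r (Sum.inl i))
    (fun m => (eq_false (hno m)).symm) (fun _ _ _ => rfl) (ρ.le_ker_rel _) h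
  exact cast hlabel (ρ.refl' _)

lemma exists_rel_inl_of_pcomp {τ ρ : Setoid (DVert n)} {i j : Fin n}
    (h : (pcomp n τ ρ).r (Sum.inl i) (Sum.inr j)) : ∃ m, τ.r (Sum.inr j) (Sum.inl m) := by
  by_contra! hno
  have hlabel := glue_le_ker_glueLabel (φ := τ.r (Sum.inr j)) (ψ := fun _ => False)
    (fun m => eq_false (hno m)) (τ.le_ker_rel _) (fun _ _ _ => rfl) h
  exact cast hlabel.symm (τ.refl' _)

lemma prank_le_prank_of_side {σ ρ : Setoid (DVert n)} (s s' : Fin n → DVert n)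
    (hprop : ∀ C : Set (DVert n), IsPropagating C ↔ (∃ i, s i ∈ C) ∧ ∃ j, s' j ∈ C)
    (hside : ∀ i i', ρ.r (s i) (s i') → σ.r (s i) (s i'))
    (hcross : ∀ i j, σ.r (s i) (s' j) → ∃ m, ρ.r (s i) (s' m)) :
    prank n σ ≤ prank n ρ := by
  let f (C : Set (DVert n)) : Set (DVert n) :=
    if h : ∃ i, s i ∈ C then {x | ρ.r x (s h.choose)} else ∅
  have hf (C) (h : ∃ i, s i ∈ C) : f C = {x | ρ.r x (s h.choose)} := dif_pos h
  refine Set.ncard_le_ncard_of_injOn f ?_ ?_ (Set.toFinite _)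
  · rintro C ⟨hC, hCprop⟩
    obtain ⟨hs, j, hj⟩ := (hprop C).1 hCprop
    obtain ⟨m, hm⟩ := hcross _ _ (Setoid.rel_of_mem_classes hC hs.choose_spec hj)
    rw [hf C hs]
    exact ⟨ρ.mem_classes _, (hprop _).2 ⟨⟨_, ρ.refl' _⟩, m, ρ.symm' hm⟩⟩
  · rintro C ⟨hC, hCprop⟩ C' ⟨hC', hC'prop⟩ hCC'
    obtain hs := ((hprop C).1 hCprop).1
    obtain hs' := ((hprop C').1 hC'prop).1
    rw [hf C hs, hf C' hs', Setoid.setOf_rel_eq_iff] at hCC'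
    rw [Setoid.eq_setOf_rel_of_mem hC hs.choose_spec,
      Setoid.eq_setOf_rel_of_mem hC' hs'.choose_spec, Setoid.setOf_rel_eq_iff]
    exact hside _ _ hCC'

lemma prank_pcomp_le_right (τ ρ : Setoid (DVert n)) : prank n (pcomp n τ ρ) ≤ prank n ρ :=
  prank_le_prank_of_side Sum.inl Sum.inr (fun _ => Iff.rfl)
    (fun _ _ h => glue_embBot h) (fun _ _ => exists_rel_inr_of_pcomp)

lemma prank_pcomp_le_left (τ ρ : Setoid (DVert n)) : prank n (pcomp n τ ρ) ≤ prank n τ :=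
  prank_le_prank_of_side Sum.inr Sum.inl (fun _ => And.comm)
    (fun _ _ h => glue_embTop h) (fun _ _ h => exists_rel_inl_of_pcomp (Setoid.symm' _ h))

end Rank

section Factor

variable {n : ℕ} {σ τ : Setoid (DVert n)} {g : Set (DVert n) → Set (DVert n)}

def propagatingParts (σ : Setoid (DVert n)) : Set (Set (DVert n)) :=
  {C ∈ σ.classes | IsPropagating C}

lemma exists_eq_setOf_rel_inl {D : Set (DVert n)} (hD : D ∈ propagatingParts τ) :
    ∃ m, {x | τ.r x (Sum.inl m)} = D :=
  let ⟨m, hm⟩ := hD.2.1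
  ⟨m, (Setoid.eq_setOf_rel_of_mem hD.1 hm).symm⟩

lemma exists_eq_setOf_rel_inr {D : Set (DVert n)} (hD : D ∈ propagatingParts τ) :
    ∃ m, {x | τ.r x (Sum.inr m)} = D :=
  let ⟨m, hm⟩ := hD.2.2
  ⟨m, (Setoid.eq_setOf_rel_of_mem hD.1 hm).symm⟩

def partLabel (σ : Setoid (DVert n)) (g : Set (DVert n) → Set (DVert n)) (C : Set (DVert n)) :
    Set (DVert n) ⊕ Set (DVert n) :=
  if C ∈ propagatingParts σ then Sum.inl (g C) else Sum.inr C

lemma partLabel_of_mem {C : Set (DVert n)} (hC : C ∈ propagatingParts σ) :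
    partLabel σ g C = Sum.inl (g C) :=
  if_pos hC

lemma partLabel_injective (hg : Set.InjOn g (propagatingParts σ)) :
    Function.Injective (partLabel σ g) := by
  intro C C' h
  unfold partLabel at h
  split_ifs at h with hC hC'
  · exact hg hC hC' (Sum.inl_injective h)
  · exact Sum.inr_injective h

lemma mem_propagatingParts_of_partLabel_eq_inl
    (hg : Set.MapsTo g (propagatingParts σ) (propagatingParts τ)) {C D : Set (DVert n)}
    (h : partLabel σ g C = Sum.inl D) : D ∈ propagatingParts τ := by
  unfold partLabel at h
  split_ifs at h with hC
  exact Sum.inl_injective h ▸ hg hC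

lemma ker_partLabel_setOf_rel (hg : Set.InjOn g (propagatingParts σ)) :
    Setoid.ker (fun v => partLabel σ g {x | σ.r x v}) = σ :=
  Setoid.ext fun _ _ => (partLabel_injective hg).eq_iff.trans Setoid.setOf_rel_eq_iff

lemma exists_pcomp_pcomp_eq (h : prank n σ ≤ prank n τ) :
    ∃ α β, pcomp n (pcomp n α τ) β = σ := by
  obtain ⟨g, hmaps, hinj⟩ : ∃ g : Set (DVert n) → Set (DVert n),
      Set.MapsTo g (propagatingParts σ) (propagatingParts τ) ∧
        Set.InjOn g (propagatingParts σ) := by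
    have hfin := Set.toFinite (propagatingParts σ)
    refine hfin.exists_injOn_of_encard_le (t := propagatingParts τ) ?_
    rw [← hfin.cast_ncard_eq, ← (Set.toFinite _).cast_ncard_eq]
    exact_mod_cast h
  let ℓ (v : DVert n) : Set (DVert n) ⊕ Set (DVert n) := partLabel σ g {x | σ.r x v}
  let t (v : DVert n) : Set (DVert n) ⊕ Set (DVert n) := Sum.inl {x | τ.r x v}
  have hτ : Setoid.ker t = τ :=
    Setoid.ext fun _ _ => Sum.inl_injective.eq_iff.trans Setoid.setOf_rel_eq_iff
  -- `α` carries the labels of `τ`'s upper row below and of `σ`'s upper row above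
  have hατ : pcomp n (Setoid.ker (Sum.elim (t ∘ Sum.inr) (ℓ ∘ Sum.inr))) (Setoid.ker t) =
      Setoid.ker (Sum.elim (t ∘ Sum.inl) (ℓ ∘ Sum.inr)) := by
    refine pcomp_ker_ker (fun _ => rfl) fun i j hij => ?_
    obtain ⟨m, hm⟩ := exists_eq_setOf_rel_inr
      (mem_propagatingParts_of_partLabel_eq_inl hmaps hij.symm)
    exact ⟨m, congrArg Sum.inl hm⟩
  -- `β` carries the labels of `σ`'s lower row below and of `τ`'s lower row above
  have hατβ : pcomp n (Setoid.ker (Sum.elim (t ∘ Sum.inl) (ℓ ∘ Sum.inr)))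
      (Setoid.ker (Sum.elim (ℓ ∘ Sum.inl) (t ∘ Sum.inl))) = Setoid.ker ℓ := by
    refine (pcomp_ker_ker (fun _ => rfl) fun i j hij => ?_).trans
      (by rw [Sum.elim_comp_inl, Sum.elim_comp_inr, Sum.elim_comp_inl_inr])
    have hprop : {x | σ.r x (Sum.inl i)} ∈ propagatingParts σ :=
      ⟨σ.mem_classes _, ⟨i, σ.refl' _⟩, j,
        σ.symm' ((ker_partLabel_setOf_rel hinj ▸ Setoid.ker_def.2 hij : σ.r _ _))⟩
    obtain ⟨m, hm⟩ := exists_eq_setOf_rel_inl (hmaps hprop)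
    exact ⟨m, (congrArg Sum.inl hm).trans (partLabel_of_mem hprop).symm⟩
  exact ⟨_, _, by rw [← hτ, hατ, hατβ, ker_partLabel_setOf_rel hinj]⟩

end Factor

section Algebra

variable {n : ℕ} {δ : ℂ}

lemma pmul_single_single (a b : Setoid (DVert n)) (c d : ℂ) :
    pmul n δ (Finsupp.single a c) (Finsupp.single b d) =
      Finsupp.single (pcomp n a b) (δ ^ ccount n a b * (c * d)) := by
  unfold pmul
  rw [Finsupp.sum_single_index, Finsupp.sum_single_index] <;> simp

lemma pmul_mem_supported {f g : Setoid (DVert n) →₀ ℂ} {S : Set (Setoid (DVert n))}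
    (h : ∀ a ∈ f.support, ∀ b ∈ g.support, pcomp n a b ∈ S) :
    pmul n δ f g ∈ Finsupp.supported ℂ ℂ S :=
  Submodule.sum_mem _ fun a ha => Submodule.sum_mem _ fun b hb =>
    Finsupp.single_mem_supported ℂ _ (h a ha b hb)

lemma pmul_mem_supported_prank_le_of_left {f g : Setoid (DVert n) →₀ ℂ} {k : ℕ}
    (hf : f ∈ Finsupp.supported ℂ ℂ {σ | prank n σ ≤ k}) :
    pmul n δ f g ∈ Finsupp.supported ℂ ℂ {σ | prank n σ ≤ k} :=
  pmul_mem_supported fun a ha b _ => (prank_pcomp_le_left a b).trans (hf ha)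

lemma pmul_mem_supported_prank_le_of_right {f g : Setoid (DVert n) →₀ ℂ} {k : ℕ}
    (hg : g ∈ Finsupp.supported ℂ ℂ {σ | prank n σ ≤ k}) :
    pmul n δ f g ∈ Finsupp.supported ℂ ℂ {σ | prank n σ ≤ k} :=
  pmul_mem_supported fun a _ b hb => (prank_pcomp_le_right a b).trans (hg hb)

lemma span_pmul_single_pmul_eq_supported (hδ : δ ≠ 0) (τ : Setoid (DVert n)) :
    Submodule.span ℂ {z | ∃ x y, z = pmul n δ (pmul n δ x (Finsupp.single τ 1)) y} =
      Finsupp.supported ℂ ℂ {σ | prank n σ ≤ prank n τ} := by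
  refine le_antisymm (Submodule.span_le.2 ?_) ?_
  · rintro _ ⟨x, y, rfl⟩
    exact pmul_mem_supported_prank_le_of_left (pmul_mem_supported_prank_le_of_right
      (Finsupp.single_mem_supported ℂ 1 (le_refl (prank n τ))))
  · rw [Finsupp.supported_eq_span_single, Submodule.span_le]
    rintro _ ⟨σ, hσ, rfl⟩
    obtain ⟨α, β, hαβ⟩ := exists_pcomp_pcomp_eq hσ
    have hmem : pmul n δ (pmul n δ (Finsupp.single α 1) (Finsupp.single τ 1))
        (Finsupp.single β 1) ∈
          Submodule.span ℂ {z | ∃ x y, z = pmul n δ (pmul n δ x (Finsupp.single τ 1)) y} :=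
      Submodule.subset_span ⟨_, _, rfl⟩
    rw [pmul_single_single, pmul_single_single, hαβ] at hmem
    obtain ⟨e, he, hmem⟩ : ∃ e ≠ (0 : ℂ), Finsupp.single σ e ∈ Submodule.span ℂ
        {z | ∃ x y, z = pmul n δ (pmul n δ x (Finsupp.single τ 1)) y} :=
      ⟨_, by simp [hδ], hmem⟩
    simpa [Finsupp.smul_single, he] using Submodule.smul_mem _ e⁻¹ hmem

end Algebra

/-- two diagrams generate the same two-sided ideal of the partition algebra
`𝐏ₙ(δ)`, `δ ≠ 0`, if and only if they have the same rank. -/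
theorem two_sided_ideal_iff_rank (n : ℕ) (δ : ℂ) (hδ : δ ≠ 0) (τ ρ : Setoid (DVert n)) :
    Submodule.span ℂ
        {z | ∃ x y, z = pmul n δ (pmul n δ x (Finsupp.single τ 1)) y} =
      Submodule.span ℂ
        {z | ∃ x y, z = pmul n δ (pmul n δ x (Finsupp.single ρ 1)) y} ↔
    prank n τ = prank n ρ := by
  rw [span_pmul_single_pmul_eq_supported hδ τ, span_pmul_single_pmul_eq_supported hδ ρ]
  refine ⟨fun h => le_antisymm ?_ ?_, fun h => h ▸ rfl⟩
  · exact Finsupp.subset_of_supported_le h.le (le_refl (prank n τ))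
  · exact Finsupp.subset_of_supported_le h.ge (le_refl (prank n ρ))
end
end

section
/- For diagrams τ, ρ, ι in the partition monoid Pₙ with ι ⋆-self-dual and all ranks of τ∘ρ∘ι, ρ∘ι, and ι equal, the permutations recording propagating-line connections satisfy π_{τ∘ρ∘ι} π_ι = π_{τ∘(ρ∘ι∘ρ⋆)} π_{ρ∘ι∘ρ⋆} π_{ρ∘ι} π_ι in the symmetric group S_{r(ι)}. -/
open scoped Classical
open Relation
noncomputable section

/-!
Cancelling `π_ι` on the right and rewriting `τ ∘ ((ρ ∘ ι) ∘ ρ⋆) = ((τ ∘ ρ) ∘ ι) ∘ ρ⋆` by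
associativity, both new factors have the form `(α ∘ ι) ∘ ρ⋆` with `r(α ∘ ι) = r(ι)`. A composite
`α ∘ ι` of the rank of `ι` merges no propagating blocks of `ι`; for `ι` self-dual the same holds
for the bottom blocks of `ρ` glued under `ι`, the `⋆`-image of `ρ ∘ ι`. So in `(α ∘ ι) ∘ ρ⋆` the
block through the middle vertex `i`, a bottom leader of `ι`, has as bottom vertices the top
vertices of the `(ρ ∘ ι)`-block of the partner `i*` of `i`, and as top vertices those of the
`(α ∘ ι)`-block of `i`. Following `i` through `π_{ρ∘ι}`, `π_{(ρ∘ι)∘ρ⋆}` (at `i*`, as `i** = i`)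
and `π_{((τ∘ρ)∘ι)∘ρ⋆}` therefore lands where `π_{(τ∘ρ)∘ι}` does.
-/

namespace Setoid
variable {α β γ : Type*}

theorem rel_sup_left {r s : Setoid α} {x y : α} (h : r x y) : (r ⊔ s) x y :=
  (le_sup_left : r ≤ r ⊔ s) h

theorem rel_sup_right {r s : Setoid α} {x y : α} (h : s x y) : (r ⊔ s) x y :=
  (le_sup_right : s ≤ r ⊔ s) h

theorem rel_congr_left (r : Setoid α) {x y z : α} (h : r x y) : r x z ↔ r y z :=
  ⟨r.trans' (r.symm' h), r.trans' h⟩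

/-- Every `b ⊔ s.map f`-chain can be shortened to one that enters the image of `f` only once. -/
theorem sup_map_rel_iff (b : Setoid β) (s : Setoid α) (f : α → β) {x y : β} :
    (b ⊔ s.map f) x y ↔
      b x y ∨ ∃ p q, b x (f p) ∧ (b.comap f ⊔ s) p q ∧ b (f q) y := by
  set t := b.comap f ⊔ s
  let m : Setoid β :=
    { r := fun x y => b x y ∨ ∃ p q, b x (f p) ∧ t p q ∧ b (f q) y
      iseqv := by
        refine ⟨fun x => .inl (b.refl' x), ?_, ?_⟩
        · rintro x y (h | ⟨p, q, hp, hpq, hq⟩)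
          · exact .inl (b.symm' h)
          · exact .inr ⟨q, p, b.symm' hq, t.symm' hpq, b.symm' hp⟩
        · rintro x y z (h | ⟨p, q, hp, hpq, hq⟩) (h' | ⟨p', q', hp', hpq', hq'⟩)
          · exact .inl (b.trans' h h')
          · exact .inr ⟨p', q', b.trans' h hp', hpq', hq'⟩
          · exact .inr ⟨p, q, hp, hpq, b.trans' hq h'⟩
          · have hqp' : t q p' := rel_sup_left (b.trans' hq hp')
            exact .inr ⟨p, q', hp, t.trans' hpq (t.trans' hqp' hpq'), hq'⟩ }
  have ht : t ≤ (b ⊔ s.map f).comap f :=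
    sup_le (fun _ _ h => rel_sup_left h) (fun _ _ h => rel_sup_right (le_comap_map h))
  have hm : m = b ⊔ s.map f := by
    refine le_antisymm ?_ (sup_le (fun _ _ h => .inl h) ?_)
    · rintro x y (h | ⟨p, q, hp, hpq, hq⟩)
      · exact rel_sup_left h
      · exact (b ⊔ s.map f).trans' (rel_sup_left hp)
          ((b ⊔ s.map f).trans' (ht hpq) (rel_sup_left hq))
    · refine eqvGen_le ?_
      rintro _ _ ⟨p, q, h, rfl, rfl⟩
      exact .inr ⟨p, q, b.refl' _, rel_sup_right h, b.refl' _⟩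
  rw [← hm]
  rfl

theorem sup_map_rel_apply_iff (b : Setoid β) (s : Setoid α) (f : α → β) {p q : α} :
    (b ⊔ s.map f) (f p) (f q) ↔ (b.comap f ⊔ s) p q := by
  rw [sup_map_rel_iff]
  constructor
  · rintro (h | ⟨p', q', hp, hpq, hq⟩)
    · exact rel_sup_left h
    · exact (b.comap f ⊔ s).trans' (rel_sup_left hp)
        ((b.comap f ⊔ s).trans' hpq (rel_sup_left hq))
  · exact fun h => .inr ⟨p, q, b.refl' _, h, b.refl' _⟩

theorem eqvGen_rel_iff_mem {g : α → α → Prop} {Z : Set α}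
    (hZ : ∀ x y, g x y → (x ∈ Z ↔ y ∈ Z)) {v : α} (hv : v ∈ Z)
    (hrel : ∀ z ∈ Z, EqvGen.setoid g v z) (w : α) : EqvGen.setoid g v w ↔ w ∈ Z := by
  let mem : Setoid α := ⟨fun x y => x ∈ Z ↔ y ∈ Z, ⟨fun _ => Iff.rfl, Iff.symm, Iff.trans⟩⟩
  exact ⟨fun h => (eqvGen_le (s := mem) hZ h).1 hv, hrel w⟩

theorem map_le_iff {r : Setoid α} {f : α → β} {s : Setoid β} : r.map f ≤ s ↔ r ≤ s.comap f :=
  ⟨fun h => le_comap_map.trans fun _ _ hxy => h hxy,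
    fun h => eqvGen_le fun _ _ ⟨_, _, hab, hx, hy⟩ => hx ▸ hy ▸ h hab⟩

theorem gc_map_comap (f : α → β) : GaloisConnection (map · f) (comap f) := fun _ _ => map_le_iff

theorem map_sup (r s : Setoid α) (f : α → β) : (r ⊔ s).map f = r.map f ⊔ s.map f :=
  (gc_map_comap f).l_sup

theorem map_map (r : Setoid α) (f : α → β) (g : β → γ) : (r.map f).map g = r.map (g ∘ f) :=
  le_antisymm (map_le_iff.2 (map_le_iff.2 le_comap_map))
    (map_le_iff.2 (le_comap_map.trans fun _ _ h => le_comap_map h))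

theorem map_rel_iff_of_injective (r : Setoid α) {f : α → β} (hf : Function.Injective f)
    {x y : β} : r.map f x y ↔ x = y ∨ ∃ a b, r a b ∧ f a = x ∧ f b = y := by
  have := congrFun (congrFun (coe_map_of_ker_le r f fun a b (h : f a = f b) => hf h ▸ r.refl' a) x) y
  simp only [Pi.sup_apply, sup_Prop_eq] at this
  rw [this, or_comm]
  rfl

theorem map_rel_eq_of_notMem_range (r : Setoid α) {f : α → β} (hf : Function.Injective f)
    {x y : β} (hx : x ∉ Set.range f) (h : r.map f x y) : y = x := by
  rcases (map_rel_iff_of_injective r hf).1 h with rfl | ⟨a, -, -, rfl, -⟩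
  exacts [rfl, absurd ⟨a, rfl⟩ hx]

theorem sup_rel_iff_of_eqOn {s r r' : Setoid α} {H : Set α}
    (hs : ∀ x y, s x y → x ∈ H → x = y) (hr' : r' ≤ r)
    (hr : ∀ x y, r x y → x ∉ H → y ∉ H → r' x y) {x y : α} (hx : x ∉ H) (hy : y ∉ H) :
    (s ⊔ r) x y ↔ (s ⊔ r') x y := by
  refine ⟨fun h => ?_, fun h => (sup_le_sup_left hr' s) h⟩
  let Z : Set α := {z | (z ∉ H ∧ (s ⊔ r') x z) ∨ (z ∈ H ∧ ∃ k ∉ H, (s ⊔ r') x k ∧ r k z)}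
  have step : ∀ a b, s a b ∨ r a b → a ∈ Z → b ∈ Z := by
    rintro a b (hab | hab) (⟨ha, hxa⟩ | ⟨ha, k, hk, hxk, hka⟩)
    · have hb : b ∉ H := fun hb => ha (hs b a (s.symm' hab) hb ▸ hb)
      exact .inl ⟨hb, (s ⊔ r').trans' hxa (rel_sup_left hab)⟩
    · exact hs a b hab ha ▸ .inr ⟨ha, k, hk, hxk, hka⟩
    · by_cases hb : b ∈ H
      · exact .inr ⟨hb, a, ha, hxa, hab⟩
      · exact .inl ⟨hb, (s ⊔ r').trans' hxa (rel_sup_right (hr a b hab ha hb))⟩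
    · by_cases hb : b ∈ H
      · exact .inr ⟨hb, k, hk, hxk, r.trans' hka hab⟩
      · exact .inl ⟨hb, (s ⊔ r').trans' hxk (rel_sup_right (hr k b (r.trans' hka hab) hk hb))⟩
  have hZ : ∀ a b, (s a b ∨ r a b) → (a ∈ Z ↔ b ∈ Z) := fun a b hab =>
    ⟨step a b hab, step b a (hab.imp s.symm' r.symm')⟩
  rw [sup_eq_eqvGen] at h
  have hrel : ∀ z ∈ Z, EqvGen.setoid (fun a b => s a b ∨ r a b) x z := by
    rintro z (⟨-, hxz⟩ | ⟨-, k, -, hxk, hkz⟩) <;> rw [← sup_eq_eqvGen]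
    · exact (sup_le_sup_left hr' s) hxz
    · exact (s ⊔ r).trans' ((sup_le_sup_left hr' s) hxk) (rel_sup_right hkz)
  rcases (eqvGen_rel_iff_mem hZ (.inl ⟨hx, (s ⊔ r').refl' x⟩) hrel y).1 h with ⟨-, h⟩ | ⟨hy', -⟩
  exacts [h, absurd hy' hy]

end Setoid

namespace PartitionMonoid
variable {n : ℕ}
open Setoid

/-! ### Gluing -/

theorem embTop_eq_inr (u : DVert n) : embTop n u = Sum.inr u := by cases u <;> rfl

@[simp] theorem pstar_rel_iff (σ : Setoid (DVert n)) (x y : DVert n) :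
    pstar n σ x y ↔ σ x.swap y.swap := Iff.rfl

theorem comap_inl_pstar (σ : Setoid (DVert n)) :
    (pstar n σ).comap Sum.inl = σ.comap Sum.inr := rfl

theorem comap_inr_pstar (σ : Setoid (DVert n)) :
    (pstar n σ).comap Sum.inr = σ.comap Sum.inl := rfl

/-- The gluing `α ∘ β` seen on the vertices of `β`: the bottom blocks of `α` are laid on the top
row of `β`. -/
def lowerGlue (α β : Setoid (DVert n)) : Setoid (DVert n) := β ⊔ (α.comap Sum.inl).map Sum.inr

section Glue
variable (α β : Setoid (DVert n))

theorem lowerGlue_of_right {x y : DVert n} (h : β x y) : lowerGlue α β x y := rel_sup_left h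

theorem lowerGlue_inr_of_left {p q : Fin n} (h : α (Sum.inl p) (Sum.inl q)) :
    lowerGlue α β (Sum.inr p) (Sum.inr q) := rel_sup_right (le_comap_map h)

theorem lowerGlue_iff {x y : DVert n} :
    lowerGlue α β x y ↔ β x y ∨ ∃ p q, β x (Sum.inr p) ∧
      (β.comap Sum.inr ⊔ α.comap Sum.inl) p q ∧ β (Sum.inr q) y :=
  sup_map_rel_iff _ _ _

theorem lowerGlue_inr_inr_iff {p q : Fin n} :
    lowerGlue α β (Sum.inr p) (Sum.inr q) ↔ (β.comap Sum.inr ⊔ α.comap Sum.inl) p q :=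
  sup_map_rel_apply_iff _ _ _

theorem lowerGlue_inl_inr_iff {a q : Fin n} :
    lowerGlue α β (Sum.inl a) (Sum.inr q) ↔
      ∃ p, β (Sum.inl a) (Sum.inr p) ∧ (β.comap Sum.inr ⊔ α.comap Sum.inl) p q := by
  rw [lowerGlue_iff]
  constructor
  · rintro (h | ⟨p, p', hp, hpp', hp'q⟩)
    · exact ⟨q, h, (β.comap Sum.inr ⊔ α.comap Sum.inl).refl' q⟩
    · exact ⟨p, hp, (β.comap Sum.inr ⊔ α.comap Sum.inl).trans' hpp' (rel_sup_left hp'q)⟩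
  · rintro ⟨p, hp, hpq⟩
    exact .inr ⟨p, q, hp, hpq, β.refl' _⟩

theorem glue_embBot {u v : DVert n} (h : β u v) : glue n α β (embBot n u) (embBot n v) :=
  Relation.EqvGen.rel _ _ (.inl ⟨u, v, h, rfl, rfl⟩)

theorem glue_embTop {u v : DVert n} (h : α u v) : glue n α β (embTop n u) (embTop n v) :=
  Relation.EqvGen.rel _ _ (.inr ⟨u, v, h, rfl, rfl⟩)

theorem glue_embBot_of_lowerGlue {x y : DVert n} (h : lowerGlue α β x y) :
    glue n α β (embBot n x) (embBot n y) := by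
  refine (sup_le (fun _ _ h => glue_embBot α β h) (eqvGen_le ?_) :
    lowerGlue α β ≤ (glue n α β).comap (embBot n)) h
  rintro _ _ ⟨p, q, hpq, rfl, rfl⟩
  exact glue_embTop α β hpq

theorem glue_rel_iff_mem {Z : Set (TVert n)}
    (hβ : ∀ u u', β u u' → embBot n u ∈ Z → embBot n u' ∈ Z)
    (hα : ∀ u u', α u u' → embTop n u ∈ Z → embTop n u' ∈ Z)
    {v : TVert n} (hv : v ∈ Z) (hrel : ∀ z ∈ Z, glue n α β v z) (w : TVert n) :
    glue n α β v w ↔ w ∈ Z := by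
  refine eqvGen_rel_iff_mem ?_ hv hrel w
  rintro _ _ (⟨u, u', h, rfl, rfl⟩ | ⟨u, u', h, rfl, rfl⟩)
  · exact ⟨hβ u u' h, hβ u' u (β.symm' h)⟩
  · exact ⟨hα u u' h, hα u' u (α.symm' h)⟩

def botBlock (x : DVert n) : Set (TVert n)
  | Sum.inl c => lowerGlue α β (Sum.inl c) x
  | Sum.inr m => ∃ p, lowerGlue α β (Sum.inr p) x ∧ α (Sum.inl p) m

theorem mem_botBlock_embBot {x u : DVert n} :
    embBot n u ∈ botBlock α β x ↔ lowerGlue α β u x := by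
  rcases u with c | q
  · exact Iff.rfl
  · refine ⟨fun ⟨p, hp, hpq⟩ => ?_, fun h => ⟨q, h, α.refl' _⟩⟩
    exact (lowerGlue α β).trans' (lowerGlue_inr_of_left α β (α.symm' hpq)) hp

theorem glue_embBot_iff (x : DVert n) (w : TVert n) :
    glue n α β (embBot n x) w ↔ w ∈ botBlock α β x := by
  refine glue_rel_iff_mem α β ?_ ?_ (mem_botBlock_embBot α β |>.2 ((lowerGlue α β).refl' x)) ?_ w
  · intro u u' h hu
    rw [mem_botBlock_embBot] at hu ⊢
    exact (lowerGlue α β).trans' (lowerGlue_of_right α β (β.symm' h)) hu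
  · intro u u' h hu
    rw [embTop_eq_inr] at hu ⊢
    obtain ⟨p, hp, hpu⟩ := hu
    exact ⟨p, hp, α.trans' hpu h⟩
  · rintro (c | m) hz
    · exact (glue n α β).symm' (glue_embBot_of_lowerGlue α β (x := Sum.inl c) hz)
    · obtain ⟨p, hp, hpm⟩ := hz
      rw [← embTop_eq_inr]
      exact (glue n α β).trans' ((glue n α β).symm' (glue_embBot_of_lowerGlue α β hp))
        (glue_embTop α β hpm)

theorem pcomp_inl_inl_iff {a c : Fin n} :
    pcomp n α β (Sum.inl a) (Sum.inl c) ↔ lowerGlue α β (Sum.inl a) (Sum.inl c) :=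
  (glue_embBot_iff α β (Sum.inl a) (Sum.inl c)).trans (lowerGlue α β).comm'

theorem pcomp_inl_inr_iff {a t : Fin n} :
    pcomp n α β (Sum.inl a) (Sum.inr t) ↔
      ∃ p, lowerGlue α β (Sum.inr p) (Sum.inl a) ∧ α (Sum.inl p) (Sum.inr t) :=
  glue_embBot_iff α β (Sum.inl a) (Sum.inr (Sum.inr t))

theorem pcomp_inl_inl_of_right {a c : Fin n} (h : β (Sum.inl a) (Sum.inl c)) :
    pcomp n α β (Sum.inl a) (Sum.inl c) :=
  (pcomp_inl_inl_iff α β).2 (lowerGlue_of_right α β h)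

theorem exists_inr_of_pcomp_inl_inr {a t : Fin n} (h : pcomp n α β (Sum.inl a) (Sum.inr t)) :
    ∃ p, β (Sum.inl a) (Sum.inr p) := by
  obtain ⟨p, hp, -⟩ := (pcomp_inl_inr_iff α β).1 h
  obtain ⟨p₀, hp₀, -⟩ := (lowerGlue_inl_inr_iff α β).1 ((lowerGlue α β).symm' hp)
  exact ⟨p₀, hp₀⟩

end Glue

/-! ### Leaders and positions of propagating blocks -/

def Propagates (σ : Setoid (DVert n)) (x : DVert n) : Prop :=
  (∃ i, σ x (Sum.inl i)) ∧ ∃ j, σ x (Sum.inr j)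

theorem Propagates.of_rel {σ : Setoid (DVert n)} {x y : DVert n} (hx : Propagates σ x)
    (h : σ x y) : Propagates σ y :=
  ⟨hx.1.imp fun _ hi => σ.trans' (σ.symm' h) hi, hx.2.imp fun _ hj => σ.trans' (σ.symm' h) hj⟩

theorem isPropagating_setOf_rel {σ : Setoid (DVert n)} {x : DVert n} :
    IsPropagating {y | σ y x} ↔ Propagates σ x := by
  simp only [IsPropagating, Propagates, Set.mem_ofPred_eq, σ.comm' (x := x)]

def IsRow (e : Fin n → DVert n) : Prop := e = Sum.inl ∨ e = Sum.inr

theorem isRow_inl : IsRow (Sum.inl : Fin n → DVert n) := .inl rfl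
theorem isRow_inr : IsRow (Sum.inr : Fin n → DVert n) := .inr rfl

theorem Propagates.exists_rel {σ : Setoid (DVert n)} {e : Fin n → DVert n} (he : IsRow e)
    {x : DVert n} (hx : Propagates σ x) : ∃ i, σ x (e i) := by
  rcases he with rfl | rfl
  exacts [hx.1, hx.2]

def IsLeader (σ : Setoid (DVert n)) (e : Fin n → DVert n) (i : Fin n) : Prop :=
  Propagates σ (e i) ∧ ∀ j, σ (e i) (e j) → i ≤ j

def leaders (σ : Setoid (DVert n)) (e : Fin n → DVert n) : Finset (Fin n) :=
  Finset.univ.filter (IsLeader σ e)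

section Leaders
variable {σ : Setoid (DVert n)} {e : Fin n → DVert n}

@[simp] theorem mem_leaders {i : Fin n} : i ∈ leaders σ e ↔ IsLeader σ e i := by
  simp [leaders]

theorem IsLeader.eq {i j : Fin n} (hi : IsLeader σ e i) (hj : IsLeader σ e j)
    (h : σ (e i) (e j)) : i = j :=
  le_antisymm (hi.2 j h) (hj.2 i (σ.symm' h))

theorem Propagates.exists_isLeader (he : IsRow e) {x : DVert n} (hx : Propagates σ x) :
    ∃ i, IsLeader σ e i ∧ σ x (e i) := by
  have hS : (Finset.univ.filter fun i => σ x (e i)).Nonempty := by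
    obtain ⟨i, hi⟩ := hx.exists_rel he
    exact ⟨i, by simpa using hi⟩
  have hmin := Finset.mem_filter.1 (Finset.min'_mem _ hS)
  refine ⟨_, ⟨hx.of_rel hmin.2, fun j hj => Finset.min'_le _ _ ?_⟩, hmin.2⟩
  simpa using σ.trans' hmin.2 hj

theorem setOf_isPropagating_eq_image (he : IsRow e) :
    {C ∈ σ.classes | IsPropagating C} = (fun i => {y | σ y (e i)}) '' (leaders σ e) := by
  ext C
  constructor
  · rintro ⟨⟨x, rfl⟩, hC⟩
    obtain ⟨i, hi, hxi⟩ := (isPropagating_setOf_rel.1 hC).exists_isLeader he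
    refine ⟨i, by simpa using hi, Set.ext fun y => ?_⟩
    exact ⟨fun hy => σ.trans' hy (σ.symm' hxi), fun hy => σ.trans' hy hxi⟩
  · rintro ⟨i, hi, rfl⟩
    exact ⟨⟨e i, rfl⟩, isPropagating_setOf_rel.2 (mem_leaders.1 hi).1⟩

theorem injOn_setOf_rel_leaders :
    Set.InjOn (fun i => {y | σ y (e i)}) (leaders σ e) := by
  intro i hi j hj h
  have h' : {y | σ y (e i)} = {y | σ y (e j)} := h
  have : e i ∈ {y | σ y (e j)} := h' ▸ σ.refl' (e i)
  exact (mem_leaders.1 hi).eq (mem_leaders.1 hj) this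

theorem prank_eq_card_leaders (he : IsRow e) : prank n σ = (leaders σ e).card := by
  rw [prank, setOf_isPropagating_eq_image he, injOn_setOf_rel_leaders.ncard_image,
    Set.ncard_coe_finset]

end Leaders

theorem leaders_eq_of_rel_iff {σ σ' : Setoid (DVert n)} {e e' : Fin n → DVert n}
    (hP : ∀ j, Propagates σ (e j) ↔ Propagates σ' (e' j))
    (hrel : ∀ j, Propagates σ (e j) → ∀ k, σ (e j) (e k) ↔ σ' (e' j) (e' k)) :
    leaders σ e = leaders σ' e' := by
  ext j
  simp only [mem_leaders, IsLeader]
  exact ⟨fun h => ⟨(hP j).1 h.1, fun k hk => h.2 k ((hrel j h.1 k).2 hk)⟩,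
    fun h => ⟨(hP j).2 h.1, fun k hk => h.2 k ((hrel j ((hP j).2 h.1) k).1 hk)⟩⟩

def rankIn (s : Finset (Fin n)) (a : Fin n) : ℕ := (s.filter (· < a)).card

theorem rankIn_lt_card {s : Finset (Fin n)} {a : Fin n} (ha : a ∈ s) : rankIn s a < s.card :=
  Finset.card_lt_card (Finset.filter_ssubset.2 ⟨a, ha, lt_irrefl a⟩)

theorem rankIn_lt_rankIn {s : Finset (Fin n)} {a b : Fin n} (ha : a ∈ s) (hab : a < b) :
    rankIn s a < rankIn s b := by
  refine Finset.card_lt_card ⟨fun x hx => ?_, fun hsub => ?_⟩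
  · simp only [Finset.mem_filter] at hx ⊢
    exact ⟨hx.1, hx.2.trans hab⟩
  · simpa using hsub (Finset.mem_filter.2 ⟨ha, hab⟩)

theorem rankIn_injOn (s : Finset (Fin n)) : Set.InjOn (rankIn s) s := by
  intro a ha b hb h
  rcases lt_trichotomy a b with hab | rfl | hab
  · exact absurd h (rankIn_lt_rankIn ha hab).ne
  · rfl
  · exact absurd h (rankIn_lt_rankIn hb hab).ne'

theorem exists_rankIn_eq {s : Finset (Fin n)} {k : ℕ} (hs : s.card = k) (x : Fin k) :
    ∃ a ∈ s, rankIn s a = x := by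
  have hinj : Function.Injective fun a : s => (⟨rankIn s a, hs ▸ rankIn_lt_card a.2⟩ : Fin k) :=
    fun a b h => Subtype.ext (rankIn_injOn s a.2 b.2 (congrArg Fin.val h))
  obtain ⟨a, ha⟩ := (hinj.bijective_of_nat_card_le (by simp [hs])).2 x
  exact ⟨a, a.2, congrArg Fin.val ha⟩

/-- `minL` is `minOn Sum.inl` and `minR` is `minOn Sum.inr`. -/
def minOn (e : Fin n → DVert n) (C : Set (DVert n)) : ℕ :=
  sInf {m : ℕ | ∃ j : Fin n, (j : ℕ) = m ∧ e j ∈ C}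

/-- `posL` is `posOn σ Sum.inl` and `posR` is `posOn σ Sum.inr`. -/
def posOn (σ : Setoid (DVert n)) (e : Fin n → DVert n) (C : Set (DVert n)) : ℕ :=
  {D ∈ σ.classes | IsPropagating D ∧ minOn e D < minOn e C}.ncard

section Positions
variable {σ : Setoid (DVert n)} {e : Fin n → DVert n}

theorem minOn_setOf_rel {i : Fin n} (hi : IsLeader σ e i) : minOn e {y | σ y (e i)} = i := by
  refine le_antisymm (Nat.sInf_le ⟨i, rfl, σ.refl' _⟩) (le_csInf ⟨i, i, rfl, σ.refl' _⟩ ?_)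
  rintro m ⟨j, rfl, hj⟩
  exact_mod_cast hi.2 j (σ.symm' hj)

theorem posOn_setOf_rel (he : IsRow e) {i : Fin n} (hi : i ∈ leaders σ e) :
    posOn σ e {y | σ y (e i)} = rankIn (leaders σ e) i := by
  have hset : {D ∈ σ.classes | IsPropagating D ∧ minOn e D < minOn e {y | σ y (e i)}} =
      (fun j => {y | σ y (e j)}) '' ((leaders σ e).filter (· < i)) := by
    ext D
    have hD : (D ∈ σ.classes ∧ IsPropagating D) ↔
        D ∈ (fun j => {y | σ y (e j)}) '' (leaders σ e) := by
      rw [← setOf_isPropagating_eq_image he]; rfl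
    change (D ∈ σ.classes ∧ IsPropagating D ∧ _) ↔ _
    rw [← and_assoc, hD, minOn_setOf_rel (mem_leaders.1 hi)]
    constructor
    · rintro ⟨⟨j, hj, rfl⟩, hji⟩
      rw [minOn_setOf_rel (mem_leaders.1 hj)] at hji
      refine ⟨j, ?_, rfl⟩
      rw [Finset.coe_filter]
      exact ⟨hj, Fin.lt_def.2 hji⟩
    · rintro ⟨j, hj, rfl⟩
      rw [Finset.coe_filter] at hj
      refine ⟨⟨j, hj.1, rfl⟩, ?_⟩
      rw [minOn_setOf_rel (mem_leaders.1 hj.1)]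
      exact hj.2
  rw [posOn, hset, (injOn_setOf_rel_leaders.mono (Finset.filter_subset _ _)).ncard_image,
    Set.ncard_coe_finset, rankIn]

theorem posOn_lt {k : ℕ} (he : IsRow e) (hk : prank n σ = k) {C : Set (DVert n)}
    (hC : C ∈ {C ∈ σ.classes | IsPropagating C}) : posOn σ e C < k := by
  rw [setOf_isPropagating_eq_image he] at hC
  obtain ⟨i, hi, rfl⟩ := hC
  rw [posOn_setOf_rel he hi, ← hk, prank_eq_card_leaders he]
  exact rankIn_lt_card hi

theorem posOn_injOn (he : IsRow e) : Set.InjOn (posOn σ e) {C ∈ σ.classes | IsPropagating C} := by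
  rw [setOf_isPropagating_eq_image he]
  rintro _ ⟨i, hi, rfl⟩ _ ⟨j, hj, rfl⟩ h
  rw [posOn_setOf_rel he hi, posOn_setOf_rel he hj] at h
  rw [rankIn_injOn _ hi hj h]

noncomputable def posEquiv (he : IsRow e) {k : ℕ} (hk : prank n σ = k) :
    {C ∈ σ.classes | IsPropagating C} ≃ Fin k :=
  Equiv.ofBijective (fun C => ⟨posOn σ e C, posOn_lt he hk C.2⟩) <|
    Function.Injective.bijective_of_nat_card_le
      (fun C D h => Subtype.ext (posOn_injOn he C.2 D.2 (congrArg Fin.val h)))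
      (by rw [Nat.card_coe_set_eq, Nat.card_eq_fintype_card, Fintype.card_fin, ← hk]; rfl)

end Positions

theorem permAt_spec (σ : Setoid (DVert n)) {k : ℕ} (hk : prank n σ = k) :
    ∀ C ∈ σ.classes, IsPropagating C → ∀ h : posL n σ C < k,
      ((permAt n k σ ⟨posL n σ C, h⟩ : Fin k) : ℕ) = posR n σ C := by
  refine Classical.epsilon_spec (p := fun π : Equiv.Perm (Fin k) => ∀ C ∈ σ.classes,
    IsPropagating C → ∀ h : posL n σ C < k, ((π ⟨posL n σ C, h⟩ : Fin k) : ℕ) = posR n σ C)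
    ⟨(posEquiv isRow_inl hk).symm.trans (posEquiv isRow_inr hk), fun C hC hP h => ?_⟩
  have : (posEquiv isRow_inl hk).symm ⟨posL n σ C, h⟩ = ⟨C, hC, hP⟩ :=
    (posEquiv isRow_inl hk).symm_apply_eq.2 rfl
  simp only [Equiv.trans_apply, this]
  rfl

theorem permAt_apply_of_rel {σ : Setoid (DVert n)} {k : ℕ} (hk : prank n σ = k) {i j : Fin n}
    (hi : IsLeader σ Sum.inl i) (hj : IsLeader σ Sum.inr j)
    (hij : σ (Sum.inl i) (Sum.inr j)) {x : Fin k} (hx : (x : ℕ) = rankIn (leaders σ Sum.inl) i) :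
    ((permAt n k σ x : Fin k) : ℕ) = rankIn (leaders σ Sum.inr) j := by
  have hC : {y | σ y (Sum.inl i)} ∈ {C ∈ σ.classes | IsPropagating C} :=
    ⟨⟨_, rfl⟩, isPropagating_setOf_rel.2 hi.1⟩
  have hpos : posL n σ {y | σ y (Sum.inl i)} = x :=
    (posOn_setOf_rel isRow_inl (mem_leaders.2 hi)).trans hx.symm
  have hblock : {y | σ y (Sum.inl i)} = {y | σ y (Sum.inr j)} :=
    Set.ext fun y => ⟨fun hy => σ.trans' hy hij, fun hy => σ.trans' hy (σ.symm' hij)⟩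
  rw [show x = ⟨posL n σ {y | σ y (Sum.inl i)}, hpos ▸ x.2⟩ from Fin.ext hpos.symm,
    permAt_spec σ hk _ hC.1 hC.2]
  change posOn σ Sum.inr _ = _
  rw [hblock, posOn_setOf_rel isRow_inr (mem_leaders.2 hj)]

/-! ### Composites of the same rank -/

section RankPreserving
variable {α ι : Setoid (DVert n)}

theorem propagates_of_pcomp_inl_inr {p t : Fin n} (h : pcomp n α ι (Sum.inl p) (Sum.inr t)) :
    Propagates ι (Sum.inl p) :=
  ⟨⟨p, ι.refl' _⟩, exists_inr_of_pcomp_inl_inr α ι h⟩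

theorem exists_isLeader_pcomp_inl_inr {p t : Fin n}
    (h : pcomp n α ι (Sum.inl p) (Sum.inr t)) :
    ∃ i, IsLeader ι Sum.inl i ∧ pcomp n α ι (Sum.inl i) (Sum.inr t) := by
  obtain ⟨i, hi, hpi⟩ := (propagates_of_pcomp_inl_inr h).exists_isLeader isRow_inl
  exact ⟨i, hi, (pcomp n α ι).trans' ((pcomp n α ι).symm' (pcomp_inl_inl_of_right α ι hpi)) h⟩

theorem exists_isLeader_rel_of_propagates {t : Fin n}
    (ht : Propagates (pcomp n α ι) (Sum.inr t)) :
    ∃ i, IsLeader ι Sum.inl i ∧ pcomp n α ι (Sum.inl i) (Sum.inr t) := by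
  obtain ⟨p, hp⟩ := ht.1
  exact exists_isLeader_pcomp_inl_inr ((pcomp n α ι).symm' hp)

variable (hrk : prank n (pcomp n α ι) = prank n ι)
include hrk

/-- Sending a bottom leader of `α ∘ ι` to the leader of its `ι`-block is injective, and both sets
of leaders have the same size. -/
theorem exists_isLeader_pcomp_rel {i : Fin n} (hi : IsLeader ι Sum.inl i) :
    ∃ m, IsLeader (pcomp n α ι) Sum.inl m ∧ ι (Sum.inl m) (Sum.inl i) := by
  have hprop : ∀ m ∈ leaders (pcomp n α ι) Sum.inl, Propagates ι (Sum.inl m) := fun m hm => by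
    obtain ⟨t, ht⟩ := (mem_leaders.1 hm).1.2
    exact propagates_of_pcomp_inl_inr ht
  choose f hf hmf using fun m hm => (hprop m hm).exists_isLeader isRow_inl
  have hinj : ∀ m₁ m₂ hm₁ hm₂, f m₁ hm₁ = f m₂ hm₂ → m₁ = m₂ := by
    intro m₁ m₂ hm₁ hm₂ h
    refine (mem_leaders.1 hm₁).eq (mem_leaders.1 hm₂) (pcomp_inl_inl_of_right α ι ?_)
    exact ι.trans' (hmf m₁ hm₁) (h ▸ ι.symm' (hmf m₂ hm₂))
  have hcard : (leaders ι Sum.inl).card ≤ (leaders (pcomp n α ι) Sum.inl).card := by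
    rw [← prank_eq_card_leaders isRow_inl, ← prank_eq_card_leaders isRow_inl, hrk]
  obtain ⟨m, hm, rfl⟩ := Finset.surj_on_of_inj_on_of_card_le f
    (fun m hm => mem_leaders.2 (hf m hm)) hinj hcard i (mem_leaders.2 hi)
  exact ⟨m, mem_leaders.1 hm, hmf m hm⟩

theorem propagates_pcomp_of_rank_eq {a : Fin n} (ha : Propagates ι (Sum.inl a)) :
    Propagates (pcomp n α ι) (Sum.inl a) := by
  obtain ⟨i, hi, hai⟩ := ha.exists_isLeader isRow_inl
  obtain ⟨m, hm, hmi⟩ := exists_isLeader_pcomp_rel hrk hi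
  exact hm.1.of_rel (pcomp_inl_inl_of_right α ι (ι.trans' hmi (ι.symm' hai)))

theorem rel_of_pcomp_of_rank_eq {a b : Fin n} (ha : Propagates ι (Sum.inl a))
    (hb : Propagates ι (Sum.inl b)) (h : pcomp n α ι (Sum.inl a) (Sum.inl b)) :
    ι (Sum.inl a) (Sum.inl b) := by
  have key : ∀ {c}, Propagates ι (Sum.inl c) →
      ∃ m, IsLeader (pcomp n α ι) Sum.inl m ∧ ι (Sum.inl m) (Sum.inl c) := fun hc => by
    obtain ⟨i, hi, hci⟩ := hc.exists_isLeader isRow_inl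
    obtain ⟨m, hm, hmi⟩ := exists_isLeader_pcomp_rel hrk hi
    exact ⟨m, hm, ι.trans' hmi (ι.symm' hci)⟩
  obtain ⟨m, hm, hma⟩ := key ha
  obtain ⟨m', hm', hmb⟩ := key hb
  obtain rfl : m = m' := hm.eq hm' <| (pcomp n α ι).trans' (pcomp_inl_inl_of_right α ι hma)
    ((pcomp n α ι).trans' h ((pcomp n α ι).symm' (pcomp_inl_inl_of_right α ι hmb)))
  exact ι.trans' (ι.symm' hma) hmb

theorem rel_of_lowerGlue_of_rank_eq {x y : DVert n} (hx : Propagates ι x) (hy : Propagates ι y)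
    (h : lowerGlue α ι x y) : ι x y := by
  obtain ⟨a, ha⟩ := hx.1
  obtain ⟨b, hb⟩ := hy.1
  have hab : lowerGlue α ι (Sum.inl a) (Sum.inl b) := (lowerGlue α ι).trans'
    (lowerGlue_of_right α ι (ι.symm' ha)) ((lowerGlue α ι).trans' h (lowerGlue_of_right α ι hb))
  have := rel_of_pcomp_of_rank_eq hrk (hx.of_rel ha) (hy.of_rel hb) ((pcomp_inl_inl_iff α ι).2 hab)
  exact ι.trans' ha (ι.trans' this (ι.symm' hb))

theorem pcomp_inl_inl_iff_of_rank_eq {a b : Fin n} :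
    pcomp n α ι (Sum.inl a) (Sum.inl b) ↔ ι (Sum.inl a) (Sum.inl b) := by
  refine ⟨fun h => ?_, pcomp_inl_inl_of_right α ι⟩
  rcases (lowerGlue_iff α ι).1 ((pcomp_inl_inl_iff α ι).1 h) with h' | ⟨p, q, hp, -, hq⟩
  · exact h'
  · exact rel_of_pcomp_of_rank_eq hrk ⟨⟨a, ι.refl' _⟩, ⟨p, hp⟩⟩
      ⟨⟨b, ι.refl' _⟩, ⟨q, ι.symm' hq⟩⟩ h

theorem comap_inl_pcomp_of_rank_eq : (pcomp n α ι).comap Sum.inl = ι.comap Sum.inl :=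
  Setoid.ext fun _ _ => pcomp_inl_inl_iff_of_rank_eq hrk

theorem leaders_pcomp_of_rank_eq : leaders (pcomp n α ι) Sum.inl = leaders ι Sum.inl := by
  ext j
  simp only [mem_leaders, IsLeader, pcomp_inl_inl_iff_of_rank_eq hrk]
  refine and_congr_left fun _ => ⟨fun hj => ?_, propagates_pcomp_of_rank_eq hrk⟩
  obtain ⟨t, ht⟩ := hj.2
  exact propagates_of_pcomp_inl_inr ht

end RankPreserving

/-! ### Self-dual diagrams -/

/-- The top leader of the block of the bottom vertex `i` (junk value `i` if that block does not
reach the top row). -/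
noncomputable def partner (ι : Setoid (DVert n)) (i : Fin n) : Fin n :=
  if h : ∃ j, IsLeader ι Sum.inr j ∧ ι (Sum.inl i) (Sum.inr j) then h.choose else i

theorem Propagates.partner_spec {ι : Setoid (DVert n)} {i : Fin n}
    (hi : Propagates ι (Sum.inl i)) :
    IsLeader ι Sum.inr (partner ι i) ∧ ι (Sum.inl i) (Sum.inr (partner ι i)) := by
  have h := hi.exists_isLeader isRow_inr
  rw [partner, dif_pos h]
  exact h.choose_spec

section SelfDual
variable {ι : Setoid (DVert n)} (hι : pstar n ι = ι)
include hι

theorem rel_swap_iff_of_pstar_eq (x y : DVert n) : ι x.swap y.swap ↔ ι x y := by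
  rw [← pstar_rel_iff, hι]

theorem comap_inr_eq_comap_inl_of_pstar_eq : ι.comap Sum.inr = ι.comap Sum.inl := by
  rw [← comap_inl_pstar, hι]

theorem Propagates.swap_of_pstar_eq {x : DVert n} (hx : Propagates ι x) :
    Propagates ι x.swap := by
  obtain ⟨⟨i, hi⟩, ⟨j, hj⟩⟩ := hx
  exact ⟨⟨j, (rel_swap_iff_of_pstar_eq hι x (Sum.inr j)).2 hj⟩,
    ⟨i, (rel_swap_iff_of_pstar_eq hι x (Sum.inl i)).2 hi⟩⟩

theorem isLeader_inr_iff_of_pstar_eq {j : Fin n} :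
    IsLeader ι Sum.inr j ↔ IsLeader ι Sum.inl j := by
  refine and_congr ⟨Propagates.swap_of_pstar_eq hι, Propagates.swap_of_pstar_eq hι⟩ ?_
  refine forall_congr' fun k => imp_congr_left ?_
  exact (rel_swap_iff_of_pstar_eq hι (Sum.inl j) (Sum.inl k))

theorem rel_inl_partner_of_pstar_eq {i : Fin n} (hi : IsLeader ι Sum.inl i) :
    ι (Sum.inl (partner ι i)) (Sum.inr i) :=
  (rel_swap_iff_of_pstar_eq hι (Sum.inr _) (Sum.inl _)).2 (ι.symm' hi.1.partner_spec.2)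

theorem isLeader_partner {i : Fin n} (hi : IsLeader ι Sum.inl i) :
    IsLeader ι Sum.inl (partner ι i) :=
  (isLeader_inr_iff_of_pstar_eq hι).1 hi.1.partner_spec.1

theorem partner_partner {i : Fin n} (hi : IsLeader ι Sum.inl i) :
    partner ι (partner ι i) = i := by
  have h := (isLeader_partner hι hi).1.partner_spec
  refine h.1.eq ((isLeader_inr_iff_of_pstar_eq hι).2 hi) ?_
  exact ι.trans' (ι.symm' h.2) (rel_inl_partner_of_pstar_eq hι hi)

theorem sup_comap_rel_iff_lowerGlue (ρ : Setoid (DVert n)) {i : Fin n}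
    (hi : IsLeader ι Sum.inl i) (p : Fin n) :
    (ι.comap Sum.inl ⊔ ρ.comap Sum.inl) p i ↔
      lowerGlue ρ ι (Sum.inr p) (Sum.inl (partner ι i)) := by
  have hi' : lowerGlue ρ ι (Sum.inr i) (Sum.inl (partner ι i)) :=
    lowerGlue_of_right ρ ι (ι.symm' (rel_inl_partner_of_pstar_eq hι hi))
  rw [← comap_inr_eq_comap_inl_of_pstar_eq hι, ← lowerGlue_inr_inr_iff]
  exact ⟨fun h => (lowerGlue ρ ι).trans' h hi',
    fun h => (lowerGlue ρ ι).trans' h ((lowerGlue ρ ι).symm' hi')⟩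

theorem exists_partner_rel_of_propagates {ρ : Setoid (DVert n)} {a : Fin n}
    (ha : Propagates (pcomp n ρ ι) (Sum.inr a)) :
    ∃ i, IsLeader ι Sum.inl i ∧ pcomp n ρ ι (Sum.inl (partner ι i)) (Sum.inr a) := by
  obtain ⟨p, hp⟩ := ha.1
  obtain ⟨i, hi, hia⟩ := exists_isLeader_pcomp_inl_inr ((pcomp n ρ ι).symm' hp)
  exact ⟨partner ι i, isLeader_partner hι hi, (partner_partner hι hi).symm ▸ hia⟩

/-- Under `⋆`, laying the bottom blocks of `ρ` under `ι` is laying them on top of `ι`. -/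
theorem rel_of_sup_comap_rel {ρ : Setoid (DVert n)} (h2 : prank n (pcomp n ρ ι) = prank n ι)
    {a b : Fin n} (ha : Propagates ι (Sum.inl a)) (hb : Propagates ι (Sum.inl b))
    (h : (ι.comap Sum.inl ⊔ ρ.comap Sum.inl) a b) : ι (Sum.inl a) (Sum.inl b) := by
  rw [← comap_inr_eq_comap_inl_of_pstar_eq hι, ← lowerGlue_inr_inr_iff] at h
  refine (rel_swap_iff_of_pstar_eq hι (Sum.inl a) (Sum.inl b)).1 ?_
  exact rel_of_lowerGlue_of_rank_eq h2 (ha.swap_of_pstar_eq hι) (hb.swap_of_pstar_eq hι) h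

end SelfDual

/-! ### Associativity -/

theorem glue_eq_sup_map (α β : Setoid (DVert n)) :
    glue n α β = β.map (embBot n) ⊔ α.map (embTop n) := by
  refine le_antisymm (eqvGen_le ?_) (sup_le (map_le_iff.2 fun _ _ h => glue_embBot α β h)
    (map_le_iff.2 fun _ _ h => glue_embTop α β h))
  rintro _ _ (⟨u, v, h, rfl, rfl⟩ | ⟨u, v, h, rfl, rfl⟩)
  · exact rel_sup_left (le_comap_map h)
  · exact rel_sup_right (le_comap_map h)

theorem exists_embOut_eq {w : TVert n} (hw : ∀ p, w ≠ Sum.inr (Sum.inl p)) :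
    ∃ u, embOut n u = w := by
  rcases w with a | p | t
  · exact ⟨Sum.inl a, rfl⟩
  · exact absurd rfl (hw p)
  · exact ⟨Sum.inr t, rfl⟩

/-- Next to a relation `s` that avoids the middle row, a glued diagram acts through its outer
rows only, i.e. as `pcomp n α β`. -/
theorem sup_map_glue_rel_iff {V : Type*} (α β : Setoid (DVert n)) {ψ : TVert n → V}
    (hψ : Function.Injective ψ) {s : Setoid V}
    (hs : ∀ p y, s (ψ (Sum.inr (Sum.inl p))) y → y = ψ (Sum.inr (Sum.inl p))) {x y : V}
    (hx : ∀ p, x ≠ ψ (Sum.inr (Sum.inl p))) (hy : ∀ p, y ≠ ψ (Sum.inr (Sum.inl p))) :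
    (s ⊔ (glue n α β).map ψ) x y ↔ (s ⊔ (pcomp n α β).map (ψ ∘ embOut n)) x y := by
  have hH : ∀ w, (∀ p, ψ w ≠ ψ (Sum.inr (Sum.inl p))) → ∃ u, embOut n u = w :=
    fun w hw => exists_embOut_eq fun p h => hw p (congrArg ψ h)
  refine sup_rel_iff_of_eqOn (H := Set.range fun p => ψ (Sum.inr (Sum.inl p)))
    (fun x y h ⟨p, hp⟩ => by subst hp; exact (hs p y h).symm) ?_ ?_
    (fun ⟨p, hp⟩ => hx p hp.symm) (fun ⟨p, hp⟩ => hy p hp.symm)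
  · rw [← Setoid.map_map]
    exact map_le_iff.2 (map_le_iff.2 fun _ _ h => le_comap_map h)
  · intro z w h hz hw
    rcases (map_rel_iff_of_injective _ hψ).1 h with rfl | ⟨a, b, hab, rfl, rfl⟩
    · exact Setoid.refl' _ _
    obtain ⟨u, rfl⟩ := hH a fun p hp => hz ⟨p, hp.symm⟩
    obtain ⟨v, rfl⟩ := hH b fun p hp => hw ⟨p, hp.symm⟩
    exact le_comap_map (f := ψ ∘ embOut n) (r := pcomp n α β) hab

/-- The vertices of a stack of three diagrams: rows `0`, `1`, `2`, `3` from the bottom. -/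
abbrev QVert (n : ℕ) := Fin n ⊕ TVert n

def rows01 (n : ℕ) : DVert n → QVert n := Sum.elim Sum.inl (Sum.inr ∘ Sum.inl)

/-- A glued diagram inside a stack, as its rows `0`, `1`, `3` (`skipRow1` and `skipRow3` likewise
leave out row `1`, resp. row `3`). -/
def skipRow2 : TVert n → QVert n
  | Sum.inl a => Sum.inl a
  | Sum.inr (Sum.inl p) => Sum.inr (Sum.inl p)
  | Sum.inr (Sum.inr t) => Sum.inr (Sum.inr (Sum.inr t))

def skipRow1 : TVert n → QVert n
  | Sum.inl a => Sum.inl a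
  | Sum.inr (Sum.inl p) => Sum.inr (Sum.inr (Sum.inl p))
  | Sum.inr (Sum.inr t) => Sum.inr (Sum.inr (Sum.inr t))

def skipRow3 : TVert n → QVert n
  | Sum.inl a => Sum.inl a
  | Sum.inr (Sum.inl p) => Sum.inr (Sum.inl p)
  | Sum.inr (Sum.inr t) => Sum.inr (Sum.inr (Sum.inl t))

theorem skipRow2_injective : Function.Injective (skipRow2 (n := n)) := by
  rintro (a | a | a) (b | b | b) h <;> simp_all [skipRow2]

theorem skipRow1_injective : Function.Injective (skipRow1 (n := n)) := by
  rintro (a | a | a) (b | b | b) h <;> simp_all [skipRow1]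

theorem skipRow3_injective : Function.Injective (skipRow3 (n := n)) := by
  rintro (a | a | a) (b | b | b) h <;> simp_all [skipRow3]

/-- The three diagrams `γ`, `β`, `α` stacked on the rows `0`–`1`, `1`–`2`, `2`–`3`. -/
def stack (α β γ : Setoid (DVert n)) : Setoid (QVert n) :=
  γ.map (rows01 n) ⊔ β.map (Sum.inr ∘ embBot n) ⊔ α.map (Sum.inr ∘ embTop n)

theorem glue_pcomp_left_iff (α β γ : Setoid (DVert n)) (u v : TVert n) :
    glue n (pcomp n α β) γ u v ↔ stack α β γ (skipRow2 u) (skipRow2 v) := by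
  have hmap : (glue n (pcomp n α β) γ).map skipRow2 =
      γ.map (rows01 n) ⊔ (pcomp n α β).map (Sum.inr ∘ embOut n) := by
    rw [glue_eq_sup_map, Setoid.map_sup, Setoid.map_map, Setoid.map_map]
    congr 2 <;> funext u <;> cases u <;> rfl
  have hstack : stack α β γ = γ.map (rows01 n) ⊔ (glue n α β).map Sum.inr := by
    rw [stack, sup_assoc, glue_eq_sup_map, Setoid.map_sup, Setoid.map_map, Setoid.map_map]
  have hrow2 : ∀ w : TVert n, ∀ p, skipRow2 w ≠ Sum.inr (Sum.inr (Sum.inl p)) := by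
    rintro (a | a | a) p <;> simp [skipRow2]
  rw [← comap_map_eq skipRow2 (glue n (pcomp n α β) γ) skipRow2_injective, comap_rel, hmap,
    hstack, sup_map_glue_rel_iff α β Sum.inr_injective _ (hrow2 u) (hrow2 v)]
  intro p y h
  refine map_rel_eq_of_notMem_range _ ?_ ?_ h
  · rintro (a | a) (b | b) h <;> simp_all [rows01]
  · rintro ⟨a | a, h⟩ <;> simp [rows01] at h

theorem glue_pcomp_right_iff (α β γ : Setoid (DVert n)) (u v : TVert n) :
    glue n α (pcomp n β γ) u v ↔ stack α β γ (skipRow1 u) (skipRow1 v) := by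
  have hmap : (glue n α (pcomp n β γ)).map skipRow1 =
      α.map (Sum.inr ∘ embTop n) ⊔ (pcomp n β γ).map (skipRow3 ∘ embOut n) := by
    rw [glue_eq_sup_map, Setoid.map_sup, Setoid.map_map, Setoid.map_map, sup_comm]
    congr 2 <;> funext u <;> cases u <;> rfl
  have hstack : stack α β γ = α.map (Sum.inr ∘ embTop n) ⊔ (glue n β γ).map skipRow3 := by
    rw [stack, glue_eq_sup_map, Setoid.map_sup, Setoid.map_map, Setoid.map_map, sup_comm]
    congr 3 <;> funext u <;> cases u <;> rfl
  have hrow1 : ∀ w : TVert n, ∀ p, skipRow1 w ≠ skipRow3 (Sum.inr (Sum.inl p)) := by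
    rintro (a | a | a) p <;> simp [skipRow1, skipRow3]
  rw [← comap_map_eq skipRow1 (glue n α (pcomp n β γ)) skipRow1_injective, comap_rel, hmap,
    hstack, sup_map_glue_rel_iff β γ skipRow3_injective _ (hrow1 u) (hrow1 v)]
  intro p y h
  refine map_rel_eq_of_notMem_range _ ?_ ?_ h
  · rintro (a | a) (b | b) h <;> simp_all [embTop]
  · rintro ⟨a | a, h⟩ <;> simp [skipRow3, embTop] at h

theorem pcomp_assoc (α β γ : Setoid (DVert n)) :
    pcomp n (pcomp n α β) γ = pcomp n α (pcomp n β γ) := by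
  refine Setoid.ext fun x y => ?_
  change glue n _ _ _ _ ↔ glue n _ _ _ _
  rw [glue_pcomp_left_iff, glue_pcomp_right_iff]
  cases x <;> cases y <;> rfl

/-! ### The diagram `(α ∘ ι) ∘ ρ⋆` -/

section PcompPstar
variable {α ρ ι : Setoid (DVert n)} (hι : pstar n ι = ι)
  (h2 : prank n (pcomp n ρ ι) = prank n ι) (hα : prank n (pcomp n α ι) = prank n ι)

include hα

theorem lowerGlue_pstar_inr_inr_iff {p q : Fin n} :
    lowerGlue (pcomp n α ι) (pstar n ρ) (Sum.inr p) (Sum.inr q) ↔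
      (ι.comap Sum.inl ⊔ ρ.comap Sum.inl) p q := by
  rw [lowerGlue_inr_inr_iff, comap_inr_pstar, comap_inl_pcomp_of_rank_eq hα, sup_comm]

include hι

theorem glue_pstar_mid_inl_iff {i : Fin n} (hi : IsLeader ι Sum.inl i) (c : Fin n) :
    glue n (pcomp n α ι) (pstar n ρ) (Sum.inr (Sum.inl i)) (Sum.inl c) ↔
      pcomp n ρ ι (Sum.inl (partner ι i)) (Sum.inr c) := by
  change glue n _ _ (embBot n (Sum.inr i)) _ ↔ _
  rw [glue_embBot_iff]
  change lowerGlue _ _ (Sum.inl c) (Sum.inr i) ↔ _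
  rw [lowerGlue_inl_inr_iff, pcomp_inl_inr_iff]
  rw [comap_inr_pstar, comap_inl_pcomp_of_rank_eq hα, sup_comm]
  simp only [sup_comap_rel_iff_lowerGlue hι ρ hi]
  exact exists_congr fun p => ⟨fun h => ⟨h.2, ρ.symm' h.1⟩, fun h => ⟨ρ.symm' h.2, h.1⟩⟩

theorem exists_of_pcomp_pstar_inl_inr {a t : Fin n}
    (h : pcomp n (pcomp n α ι) (pstar n ρ) (Sum.inl a) (Sum.inr t)) :
    ∃ i, IsLeader ι Sum.inl i ∧ pcomp n ρ ι (Sum.inl (partner ι i)) (Sum.inr a) ∧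
      pcomp n α ι (Sum.inl i) (Sum.inr t) := by
  obtain ⟨p, hpa, hpt⟩ := (pcomp_inl_inr_iff _ _).1 h
  obtain ⟨i, hi, hpi⟩ := (propagates_of_pcomp_inl_inr hpt).exists_isLeader isRow_inl
  have hip : glue n (pcomp n α ι) (pstar n ρ) (embBot n (Sum.inr i)) (embBot n (Sum.inr p)) :=
    glue_embBot_of_lowerGlue _ _ ((lowerGlue_pstar_inr_inr_iff hα).2 (rel_sup_left (ι.symm' hpi)))
  refine ⟨i, hi, (glue_pstar_mid_inl_iff hι hα hi a).1 ?_, ?_⟩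
  · exact (glue n _ _).trans' hip (glue_embBot_of_lowerGlue _ _ hpa)
  · exact (pcomp n α ι).trans' (pcomp_inl_inl_of_right α ι (ι.symm' hpi)) hpt

theorem pcomp_pstar_inl_inl_iff {i a : Fin n} (hi : IsLeader ι Sum.inl i)
    (ha : pcomp n ρ ι (Sum.inl (partner ι i)) (Sum.inr a)) (b : Fin n) :
    pcomp n (pcomp n α ι) (pstar n ρ) (Sum.inl a) (Sum.inl b) ↔
      pcomp n ρ ι (Sum.inl (partner ι i)) (Sum.inr b) :=
  ((glue n _ _).rel_congr_left ((glue_pstar_mid_inl_iff hι hα hi a).2 ha)).symm.trans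
    (glue_pstar_mid_inl_iff hι hα hi b)

include h2

theorem glue_pstar_mid_top_iff {i : Fin n} (hi : Propagates ι (Sum.inl i)) (t : Fin n) :
    glue n (pcomp n α ι) (pstar n ρ) (Sum.inr (Sum.inl i)) (Sum.inr (Sum.inr t)) ↔
      pcomp n α ι (Sum.inl i) (Sum.inr t) := by
  change glue n _ _ (embBot n (Sum.inr i)) _ ↔ _
  rw [glue_embBot_iff]
  change (∃ p, lowerGlue _ _ (Sum.inr p) (Sum.inr i) ∧ _) ↔ _
  simp only [lowerGlue_pstar_inr_inr_iff hα]
  refine ⟨fun ⟨p, hpi, hpt⟩ => ?_, fun h => ⟨i, Setoid.refl' _ i, h⟩⟩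
  have hip := rel_of_sup_comap_rel hι h2 (propagates_of_pcomp_inl_inr hpt) hi hpi
  exact (pcomp n α ι).trans' (pcomp_inl_inl_of_right α ι (ι.symm' hip)) hpt

theorem pcomp_pstar_inl_inr_iff {i a : Fin n} (hi : IsLeader ι Sum.inl i)
    (ha : pcomp n ρ ι (Sum.inl (partner ι i)) (Sum.inr a)) (t : Fin n) :
    pcomp n (pcomp n α ι) (pstar n ρ) (Sum.inl a) (Sum.inr t) ↔
      pcomp n α ι (Sum.inl i) (Sum.inr t) :=
  ((glue n _ _).rel_congr_left ((glue_pstar_mid_inl_iff hι hα hi a).2 ha)).symm.trans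
    (glue_pstar_mid_top_iff hι h2 hα hi.1 t)

theorem pcomp_pstar_inr_inr_iff {i t : Fin n} (hi : Propagates ι (Sum.inl i))
    (ht : pcomp n α ι (Sum.inl i) (Sum.inr t)) (t' : Fin n) :
    pcomp n (pcomp n α ι) (pstar n ρ) (Sum.inr t) (Sum.inr t') ↔
      pcomp n α ι (Sum.inl i) (Sum.inr t') :=
  ((glue n _ _).rel_congr_left ((glue_pstar_mid_top_iff hι h2 hα hi t).2 ht)).symm.trans
    (glue_pstar_mid_top_iff hι h2 hα hi t')

theorem leaders_pcomp_pstar_inl :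
    leaders (pcomp n (pcomp n α ι) (pstar n ρ)) Sum.inl = leaders (pcomp n ρ ι) Sum.inr := by
  refine leaders_eq_of_rel_iff (fun a => ⟨fun ha => ?_, fun ha => ?_⟩) fun a ha b => ?_
  · obtain ⟨t, ht⟩ := ha.2
    obtain ⟨i, -, hia, -⟩ := exists_of_pcomp_pstar_inl_inr hι hα ht
    exact ⟨⟨_, (pcomp n ρ ι).symm' hia⟩, ⟨a, (pcomp n ρ ι).refl' _⟩⟩
  · obtain ⟨i, hi, hia⟩ := exists_partner_rel_of_propagates hι ha
    obtain ⟨t, ht⟩ := (propagates_pcomp_of_rank_eq hα hi.1).2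
    exact ⟨⟨a, Setoid.refl' _ _⟩, ⟨t, (pcomp_pstar_inl_inr_iff hι h2 hα hi hia t).2 ht⟩⟩
  · obtain ⟨t, ht⟩ := ha.2
    obtain ⟨i, hi, hia, -⟩ := exists_of_pcomp_pstar_inl_inr hι hα ht
    exact (pcomp_pstar_inl_inl_iff hι hα hi hia b).trans ((pcomp n ρ ι).rel_congr_left hia)

theorem leaders_pcomp_pstar_inr :
    leaders (pcomp n (pcomp n α ι) (pstar n ρ)) Sum.inr = leaders (pcomp n α ι) Sum.inr := by
  refine leaders_eq_of_rel_iff (fun t => ⟨fun ht => ?_, fun ht => ?_⟩) fun t ht t' => ?_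
  · obtain ⟨a, ha⟩ := ht.1
    obtain ⟨i, -, -, hit⟩ := exists_of_pcomp_pstar_inl_inr hι hα (Setoid.symm' _ ha)
    exact ⟨⟨i, (pcomp n α ι).symm' hit⟩, ⟨t, (pcomp n α ι).refl' _⟩⟩
  · obtain ⟨i, hi, hit⟩ := exists_isLeader_rel_of_propagates ht
    obtain ⟨a, ha⟩ := (propagates_pcomp_of_rank_eq h2 (isLeader_partner hι hi).1).2
    exact ⟨⟨a, Setoid.symm' _ ((pcomp_pstar_inl_inr_iff hι h2 hα hi ha t).2 hit)⟩,
      ⟨t, Setoid.refl' _ _⟩⟩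
  · obtain ⟨a, ha⟩ := ht.1
    obtain ⟨i, hi, -, hit⟩ := exists_of_pcomp_pstar_inl_inr hι hα (Setoid.symm' _ ha)
    exact (pcomp_pstar_inr_inr_iff hι h2 hα hi.1 hit t').trans
      ((pcomp n α ι).rel_congr_left hit)

theorem prank_pcomp_pstar : prank n (pcomp n (pcomp n α ι) (pstar n ρ)) = prank n ι := by
  rw [prank_eq_card_leaders isRow_inl, leaders_pcomp_pstar_inl hι h2 hα,
    ← prank_eq_card_leaders isRow_inr, h2]

theorem permAt_pcomp_pstar_apply {i j j' : Fin n} (hi : IsLeader ι Sum.inl i)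
    (hj : IsLeader (pcomp n ρ ι) Sum.inr j)
    (hij : pcomp n ρ ι (Sum.inl (partner ι i)) (Sum.inr j))
    (hj' : IsLeader (pcomp n α ι) Sum.inr j') (hij' : pcomp n α ι (Sum.inl i) (Sum.inr j'))
    {x : Fin (prank n ι)} (hx : (x : ℕ) = rankIn (leaders (pcomp n ρ ι) Sum.inr) j) :
    ((permAt n (prank n ι) (pcomp n (pcomp n α ι) (pstar n ρ)) x : Fin _) : ℕ) =
      rankIn (leaders (pcomp n α ι) Sum.inr) j' := by
  have hL := leaders_pcomp_pstar_inl hι h2 hα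
  have hR := leaders_pcomp_pstar_inr hι h2 hα
  rw [← hR]
  refine permAt_apply_of_rel (prank_pcomp_pstar hι h2 hα) (mem_leaders.1 (hL ▸ mem_leaders.2 hj))
    (mem_leaders.1 (hR ▸ mem_leaders.2 hj')) ((pcomp_pstar_inl_inr_iff hι h2 hα hi hij j').2 hij')
    (hL ▸ hx)

end PcompPstar

theorem permAt_pcomp_apply {α ι : Setoid (DVert n)} (hα : prank n (pcomp n α ι) = prank n ι)
    {i j : Fin n} (hi : IsLeader ι Sum.inl i) (hj : IsLeader (pcomp n α ι) Sum.inr j)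
    (hij : pcomp n α ι (Sum.inl i) (Sum.inr j))
    {x : Fin (prank n ι)} (hx : (x : ℕ) = rankIn (leaders ι Sum.inl) i) :
    ((permAt n (prank n ι) (pcomp n α ι) x : Fin _) : ℕ) =
      rankIn (leaders (pcomp n α ι) Sum.inr) j := by
  have hL := leaders_pcomp_of_rank_eq hα
  exact permAt_apply_of_rel hα (mem_leaders.1 (hL ▸ mem_leaders.2 hi)) hj hij (hL ▸ hx)

end PartitionMonoid

open PartitionMonoid in
/-- for `ι` `⋆`-self-dual with `r(τ∘ρ∘ι) = r(ρ∘ι) = r(ι)`, the permutations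
recording the propagating-line connections satisfy
`π_{τ∘ρ∘ι} π_ι = π_{τ∘(ρ∘ι∘ρ⋆)} π_{ρ∘ι∘ρ⋆} π_{ρ∘ι} π_ι` in `S_{r(ι)}`. -/
theorem perm_cocycle (n : ℕ) (τ ρ ι : Setoid (DVert n)) (hι : pstar n ι = ι)
    (h1 : prank n (pcomp n (pcomp n τ ρ) ι) = prank n ι)
    (h2 : prank n (pcomp n ρ ι) = prank n ι) :
    permAt n (prank n ι) (pcomp n (pcomp n τ ρ) ι) * permAt n (prank n ι) ι =
      permAt n (prank n ι) (pcomp n τ (pcomp n (pcomp n ρ ι) (pstar n ρ))) *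
        permAt n (prank n ι) (pcomp n (pcomp n ρ ι) (pstar n ρ)) *
        permAt n (prank n ι) (pcomp n ρ ι) *
        permAt n (prank n ι) ι := by
  rw [← pcomp_assoc τ, ← pcomp_assoc τ ρ ι]
  refine (mul_left_inj _).2 (Equiv.ext fun x => Fin.ext ?_)
  obtain ⟨i, hi, hx⟩ := exists_rankIn_eq (prank_eq_card_leaders isRow_inl).symm x
  rw [mem_leaders] at hi
  have hi' := isLeader_partner hι hi
  obtain ⟨j₁, hj₁, hij₁⟩ := (propagates_pcomp_of_rank_eq h2 hi.1).exists_isLeader isRow_inr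
  obtain ⟨j₂, hj₂, hij₂⟩ := (propagates_pcomp_of_rank_eq h2 hi'.1).exists_isLeader isRow_inr
  obtain ⟨j₃, hj₃, hij₃⟩ := (propagates_pcomp_of_rank_eq h1 hi.1).exists_isLeader isRow_inr
  simp only [Equiv.Perm.mul_apply]
  have hπ₁ := permAt_pcomp_apply h2 hi hj₁ hij₁ hx.symm
  have hπ₂ := permAt_pcomp_pstar_apply hι h2 h2 hi' hj₁ ((partner_partner hι hi).symm ▸ hij₁)
    hj₂ hij₂ hπ₁
  rw [permAt_pcomp_apply h1 hi hj₃ hij₃ hx.symm,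
    permAt_pcomp_pstar_apply hι h2 h1 hi hj₂ hij₂ hj₃ hij₃ hπ₂]
end
end
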